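/- Let H be a Hopf algebra over a field k which admits a faithful simple left module (i.e. a simple module with zero annihilator). Then the chain group C(H) is the trivial group. -/

import Mathlib

open TensorProduct

noncomputable section

namespace Paper

universe u

section TensorDual

variable (k : Type*) [CommSemiring k]
variable (A : Type*) [Semiring A] [Algebra k A]
variable (M N : Type*) [AddCommMonoid M] [Module k M] [Module A M]
  [IsScalarTower k A M] [SMulCommClass k A M]
  [AddCommMonoid N] [Module k N] [Module A N] [IsScalarTower k A N] [SMulCommClass k A N]

/-- The representation of `A ⊗[k] A` on `M ⊗[k] N`. -/
def tensorRep : A ⊗[k] A →ₐ[k] Module.End k (M ⊗[k] N) :=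
  (Module.endTensorEndAlgHom (R := k) (S := k) (A := k) (M := M) (N := N)).comp
    (Algebra.TensorProduct.map (Algebra.lsmul k k M) (Algebra.lsmul k k N))

/-- The module structure on `M ⊗[k] N` obtained by letting `A` act through an algebra
map `Δ : A →ₐ[k] A ⊗[k] A` (e.g. the comultiplication of a bialgebra). -/
def diagModule (Δ : A →ₐ[k] A ⊗[k] A) : Module A (M ⊗[k] N) :=
  Module.compHom (M ⊗[k] N) ((tensorRep k A M N).comp Δ).toRingHom

variable {k A} in
/-- The contragredient representation on the full linear dual, the action being through an
algebra anti-endomorphism `σ` (e.g. the antipode of a Hopf algebra). -/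
def dualRep (σ : A →ₐ[k] Aᵐᵒᵖ) : A →ₐ[k] Module.End k (Module.Dual k M) where
  toFun a := ((Algebra.lsmul k k M) (σ a).unop).dualMap
  map_one' := by
    ext φ v
    simp [LinearMap.dualMap_apply]
  map_mul' a b := by
    ext φ v
    simp [LinearMap.dualMap_apply, MulOpposite.unop_mul, map_mul, Module.End.mul_apply]
  map_zero' := by
    ext φ v
    simp [LinearMap.dualMap_apply]
  map_add' a b := by
    ext φ v
    simp [LinearMap.dualMap_apply, MulOpposite.unop_add, map_add, LinearMap.add_apply]
  commutes' r := by
    ext φ v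
    simp [LinearMap.dualMap_apply, Module.algebraMap_end_apply]

variable {k A} in
/-- The module structure on the full linear dual `M*` of a module `M`, with the action through
an algebra anti-endomorphism `σ` : `(a • f) v = f (σ a • v)`. -/
def dualModule (σ : A →ₐ[k] Aᵐᵒᵖ) : Module A (Module.Dual k M) :=
  Module.compHom (Module.Dual k M) (dualRep M σ).toRingHom

end TensorDual

section Chain

variable (k : Type u) [Field k]
variable (A : Type u) [Ring A] [Algebra k A]

/-- A bundled simple left `A`-module (for an algebra `A` over a field `k`),
together with its (automatically unique) compatible `k`-vector space structure. -/
structure SimpleMod where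
  carrier : Type u
  [acg : AddCommGroup carrier]
  [modk : Module k carrier]
  [modA : Module A carrier]
  [tower : IsScalarTower k A carrier]
  [scc : SMulCommClass k A carrier]
  [simple : IsSimpleModule A carrier]

attribute [instance] SimpleMod.acg SimpleMod.modk SimpleMod.modA SimpleMod.tower
  SimpleMod.scc SimpleMod.simple

variable {k A}

/-- Isomorphism of simple modules. -/
def simpleModSetoid : Setoid (SimpleMod k A) where
  r M N := Nonempty (M.carrier ≃ₗ[A] N.carrier)
  iseqv := ⟨fun _ => ⟨LinearEquiv.refl _ _⟩, fun ⟨e⟩ => ⟨e.symm⟩,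
    fun ⟨e⟩ ⟨f⟩ => ⟨e.trans f⟩⟩

/-- The type of isomorphism classes of simple left `A`-modules. -/
def SimpleModClass (k A : Type u) [Field k] [Ring A] [Algebra k A] : Type (u + 1) :=
  Quotient (simpleModSetoid (k := k) (A := A))

/-- The annihilator of (the module underlying) a simple module. -/
def ann (M : SimpleMod k A) : Set A := (Module.annihilator A M.carrier : Ideal A)

/-- The annihilator of a tensor product of two modules, the algebra acting diagonally through
the comultiplication `Δ`. -/
def tensorAnn (Δ : A →ₐ[k] A ⊗[k] A) (M N : SimpleMod k A) : Set A :=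
  letI : Module A (M.carrier ⊗[k] N.carrier) := diagModule k A M.carrier N.carrier Δ
  (Module.annihilator A (M.carrier ⊗[k] N.carrier) : Ideal A)

/-- The annihilator of the dual (contragredient) module of `M`: the set of elements `a` whose
action on every functional `φ` (namely `v ↦ φ (σ a • v)`, where `σ` is the antipode) is zero. -/
def dualAnn (σ : A → A) (M : SimpleMod k A) : Set A :=
  {a : A | ∀ (φ : Module.Dual k M.carrier) (v : M.carrier), φ (σ a • v) = 0}

variable (k A) in
/-- The relators defining the chain group of `A` (with respect to comultiplication `Δ`,
antipode `σ` and counit `ε`): one generator per isomorphism class of simple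
`A`-modules; `g ε = 1` for the trivial module `ε`; `g M = g M' * g M''` whenever `M` is weakly
contained in `M' ⊗ M''`; and `g P = (g M)⁻¹` whenever `P` is weakly contained in the
dual of `M`. -/
def chainRels (Δ : A →ₐ[k] A ⊗[k] A) (σ : A → A) (ε : A →ₐ[k] k) :
    Set (FreeGroup (SimpleModClass k A)) :=
  {w | ∃ M : SimpleMod k A,
      (∀ (a : A) (v : M.carrier), a • v = ε a • v) ∧ w = FreeGroup.of ⟦M⟧} ∪
  {w | ∃ M M' M'' : SimpleMod k A, tensorAnn Δ M' M'' ⊆ ann M ∧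
      w = FreeGroup.of ⟦M⟧ * (FreeGroup.of ⟦M'⟧ * FreeGroup.of ⟦M''⟧)⁻¹} ∪
  {w | ∃ P M : SimpleMod k A, dualAnn σ M ⊆ ann P ∧
      w = FreeGroup.of ⟦P⟧ * FreeGroup.of ⟦M⟧}

variable (k A) in
/-- The chain group of `A` (with respect to the given comultiplication, antipode and counit),
presented by generators and relations. -/
def ChainGroup (Δ : A →ₐ[k] A ⊗[k] A) (σ : A → A) (ε : A →ₐ[k] k) : Type (u + 1) :=
  PresentedGroup (chainRels k A Δ σ ε)

instance (Δ : A →ₐ[k] A ⊗[k] A) (σ : A → A) (ε : A →ₐ[k] k) :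
    Group (ChainGroup k A Δ σ ε) :=
  inferInstanceAs (Group (PresentedGroup _))

/-- The generator of the chain group attached to a simple module. -/
def gen (Δ : A →ₐ[k] A ⊗[k] A) (σ : A → A) (ε : A →ₐ[k] k) (M : SimpleMod k A) :
    ChainGroup k A Δ σ ε :=
  PresentedGroup.of ⟦M⟧

end Chain

end Paper

end

/-!
The trivial module `ε` (the field `k` with `H` acting through the counit) is a unit for
annihilators: since `(id ⊗ ε) ∘ Δ = id`, the contraction `M ⊗ k → M` intertwines the actions, so
`ann (M ⊗ ε) ⊆ ann M`. If `M` is faithful, this annihilator is zero, hence every simple `P` is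
weakly contained in `M ⊗ ε` and `g_P = g_M g_ε = g_M`. Taking `P = ε` gives `g_M = g_ε = 1`.
-/

theorem IsSimpleModule.of_isScalarTower (R A M : Type*) [CommRing R] [Ring A]
    [Algebra R A] [AddCommGroup M] [Module R M] [Module A M] [IsScalarTower R A M]
    [IsSimpleModule R M] : IsSimpleModule A M where
  exists_pair_ne := ⟨⊥, ⊤, fun h => by
    simpa using congrArg (Submodule.restrictScalars R) h⟩
  eq_bot_or_eq_top N := by
    simpa only [Submodule.restrictScalars_eq_bot_iff, Submodule.restrictScalars_eq_top_iff]
      using eq_bot_or_eq_top (N.restrictScalars R)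

namespace Paper

theorem tensorRep_tmul {k A M N : Type*} [CommSemiring k] [Semiring A] [Algebra k A]
    [AddCommMonoid M] [Module k M] [Module A M] [IsScalarTower k A M] [SMulCommClass k A M]
    [AddCommMonoid N] [Module k N] [Module A N] [IsScalarTower k A N] [SMulCommClass k A N]
    (b b' : A) (v : M) (w : N) :
    tensorRep k A M N (b ⊗ₜ b') (v ⊗ₜ w) = (b • v) ⊗ₜ (b' • w) := by
  simp [tensorRep, Module.endTensorEndAlgHom_apply]

universe u

section CounitModule

variable (R A : Type*) [CommSemiring R] [Semiring A] [Bialgebra R A]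

abbrev counitModule : Module A R :=
  Module.compHom R (Bialgebra.counitAlgHom R A).toRingHom

attribute [local instance] counitModule

variable {R A}

theorem counit_smul_eq_mul (a : A) (r : R) : a • r = Coalgebra.counit a * r := rfl

instance : IsScalarTower R A R :=
  ⟨fun c a r => by simp only [counit_smul_eq_mul, map_smul, smul_eq_mul, mul_assoc]⟩

instance : SMulCommClass R A R :=
  ⟨fun c a r => by simp only [counit_smul_eq_mul, smul_eq_mul, mul_left_comm]⟩

theorem rid_tensorRep_comul_tmul_one {M : Type*} [AddCommMonoid M] [Module R M] [Module A M]
    [IsScalarTower R A M] [SMulCommClass R A M] (a : A) (v : M) :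
    TensorProduct.rid R M (tensorRep R A M R (Coalgebra.comul a) (v ⊗ₜ 1)) = a • v := by
  let 𝓡 := Coalgebra.Repr.arbitrary R a
  have ha : ∑ i ∈ 𝓡.index, Coalgebra.counit (R := R) (𝓡.right i) • 𝓡.left i = a := by
    simpa only [map_sum, TensorProduct.rid_tmul, one_smul]
      using congrArg (TensorProduct.rid R A) (Coalgebra.sum_tmul_counit_eq 𝓡)
  conv_rhs => rw [← ha]
  rw [← 𝓡.eq]
  simp [map_sum, tensorRep_tmul, counit_smul_eq_mul, Finset.sum_smul, smul_assoc]

variable (k A : Type u) [Field k] [Ring A] [Bialgebra k A]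

instance : IsSimpleModule A k := .of_isScalarTower k A k

abbrev counitSimpleMod : SimpleMod k A := { carrier := k }

variable {k A}

theorem tensorAnn_counitSimpleMod_subset_ann (M : SimpleMod k A) :
    tensorAnn (Bialgebra.comulAlgHom k A) M (counitSimpleMod k A) ⊆ ann M := by
  let _ : Module A (M.carrier ⊗[k] k) := diagModule k A M.carrier k (Bialgebra.comulAlgHom k A)
  intro a ha
  refine Module.mem_annihilator.mpr fun v => ?_
  rw [← rid_tensorRep_comul_tmul_one (R := k)]
  exact congrArg (TensorProduct.rid k M.carrier) (Module.mem_annihilator.mp ha (v ⊗ₜ (1 : k)))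

end CounitModule

namespace ChainGroup

variable {k A : Type u} [Field k] [Ring A] [Algebra k A]
  {Δ : A →ₐ[k] A ⊗[k] A} {σ : A → A} {ε : A →ₐ[k] k}

theorem gen_eq_one_of_smul_eq_counit_smul {M : SimpleMod k A}
    (hM : ∀ (a : A) (v : M.carrier), a • v = ε a • v) : gen Δ σ ε M = 1 :=
  PresentedGroup.one_of_mem (Or.inl (Or.inl ⟨M, hM, rfl⟩))

theorem gen_eq_mul_of_tensorAnn_subset {M M' M'' : SimpleMod k A}
    (h : tensorAnn Δ M' M'' ⊆ ann M) : gen Δ σ ε M = gen Δ σ ε M' * gen Δ σ ε M'' :=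
  (PresentedGroup.mk_eq_mk_of_mul_inv_mem (Or.inl (Or.inr ⟨M, M', M'', h, rfl⟩))).trans
    (map_mul _ _ _)

theorem subsingleton_of_forall_gen_eq_one (h : ∀ M, gen Δ σ ε M = 1) :
    Subsingleton (ChainGroup k A Δ σ ε) := by
  have eq_one (x : ChainGroup k A Δ σ ε) : x = 1 :=
    PresentedGroup.generated_by _ ⊥ (Quotient.ind h) x
  exact ⟨fun x y => (eq_one x).trans (eq_one y).symm⟩

end ChainGroup

end Paper

open Paper in
universe u in
/-- A Hopf algebra over a field admitting a faithful simple module has trivial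
chain group. -/
theorem chainGroup_trivial_of_faithful_simpleModule
    (k H : Type u) [Field k] [Ring H] [HopfAlgebra k H]
    (M : SimpleMod k H) (hM : Module.annihilator H M.carrier = ⊥) :
    Subsingleton (ChainGroup k H (Bialgebra.comulAlgHom k H)
      (fun a => HopfAlgebra.antipode (R := k) a) (Bialgebra.counitAlgHom k H)) := by
  set g := gen (Bialgebra.comulAlgHom k H) (fun a => HopfAlgebra.antipode (R := k) a)
    (Bialgebra.counitAlgHom k H)
  set E := counitSimpleMod k H
  have hE : g E = 1 :=
    ChainGroup.gen_eq_one_of_smul_eq_counit_smul fun a v => counit_smul_eq_mul a v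
  have h_ann (P : SimpleMod k H) : ann M ⊆ ann P := by
    simp [ann, hM]
  have hP (P : SimpleMod k H) : g P = g M :=
    calc g P = g M * g E := ChainGroup.gen_eq_mul_of_tensorAnn_subset
            ((tensorAnn_counitSimpleMod_subset_ann M).trans (h_ann P))
      _ = g M := by rw [hE, mul_one]
  exact ChainGroup.subsingleton_of_forall_gen_eq_one fun P => (hP P).trans ((hP E).symm.trans hE)
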